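/- Let Φ be the standard normal CDF and y ∈ {0,1}. Then the probit per-observation log-likelihood ℓ(z) = y·log Φ(z) + (1−y)·log(1−Φ(z)) is concave on ℝ. -/

import Mathlib

open Real MeasureTheory Set Filter

/-- The standard normal density. -/
noncomputable def stdGaussianPDF (x : ℝ) : ℝ :=
  (Real.sqrt (2 * Real.pi))⁻¹ * Real.exp (-x ^ 2 / 2)

/-- The standard normal cumulative distribution function. -/
noncomputable def stdGaussianCDF (x : ℝ) : ℝ :=
  ∫ t in Set.Iic x, stdGaussianPDF t

lemma pdf_pos (x : ℝ) : 0 < stdGaussianPDF x := by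
  unfold stdGaussianPDF
  have h2π : (0:ℝ) < 2 * Real.pi := by positivity
  positivity

lemma pdf_hasDerivAt (x : ℝ) :
    HasDerivAt stdGaussianPDF (-x * stdGaussianPDF x) x := by
  have h : HasDerivAt (fun t : ℝ => -t ^ 2 / 2) (-x) x := by
    have := ((hasDerivAt_pow 2 x).neg).div_const 2
    simpa using this.congr_deriv (by ring)
  have := (h.exp).const_mul ((Real.sqrt (2 * Real.pi))⁻¹)
  unfold stdGaussianPDF
  exact this.congr_deriv (by ring)

lemma pdf_eq (x : ℝ) :
    stdGaussianPDF x = (Real.sqrt (2 * Real.pi))⁻¹ * Real.exp (-(1/2 : ℝ) * x ^ 2) := by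
  unfold stdGaussianPDF; ring_nf

lemma pdf_integrable : Integrable stdGaussianPDF := by
  have : Integrable (fun x : ℝ => (Real.sqrt (2 * Real.pi))⁻¹ *
      Real.exp (-(1/2 : ℝ) * x ^ 2)) :=
    (integrable_exp_neg_mul_sq (by norm_num : (0:ℝ) < 1/2)).const_mul _
  exact this.congr (by filter_upwards with x using (pdf_eq x).symm)

lemma pdf_integral : ∫ x : ℝ, stdGaussianPDF x = 1 := by
  have h1 : ∫ x : ℝ, stdGaussianPDF x =
      (Real.sqrt (2 * Real.pi))⁻¹ * ∫ x : ℝ, Real.exp (-(1/2 : ℝ) * x ^ 2) := by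
    rw [← integral_const_mul]
    exact integral_congr_ae (by filter_upwards with x using pdf_eq x)
  rw [h1, integral_gaussian]
  have : Real.pi / (1/2 : ℝ) = 2 * Real.pi := by ring
  rw [this]
  have h2π : (0:ℝ) < Real.sqrt (2 * Real.pi) := Real.sqrt_pos.2 (by positivity)
  field_simp

lemma cdf_hasDerivAt (x : ℝ) :
    HasDerivAt stdGaussianCDF (stdGaussianPDF x) x := by
  have key : ∀ z : ℝ, stdGaussianCDF z
      = stdGaussianCDF 0 + ∫ t in (0:ℝ)..z, stdGaussianPDF t := by
    intro z
    have := intervalIntegral.integral_Iic_sub_Iic (f := stdGaussianPDF) (μ := volume)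
      (pdf_integrable.integrableOn) (pdf_integrable.integrableOn) (a := 0) (b := z)
    unfold stdGaussianCDF
    linarith [this]
  have hd : HasDerivAt (fun z : ℝ => stdGaussianCDF 0 + ∫ t in (0:ℝ)..z, stdGaussianPDF t)
      (stdGaussianPDF x) x := by
    have := intervalIntegral.integral_hasDerivAt_right
      (f := stdGaussianPDF) (a := 0) (b := x)
      (pdf_integrable.intervalIntegrable)
      (pdf_integrable.aestronglyMeasurable.stronglyMeasurableAtFilter)
      ((pdf_hasDerivAt x).continuousAt)
    exact this.const_add _
  exact hd.congr_of_eventuallyEq (by filter_upwards with z using key z)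

lemma cdf_pos (x : ℝ) : 0 < stdGaussianCDF x := by
  unfold stdGaussianCDF
  rw [setIntegral_pos_iff_support_of_nonneg_ae
    (by filter_upwards with t using (pdf_pos t).le) pdf_integrable.integrableOn]
  have hsupp : Function.support stdGaussianPDF = Set.univ := by
    ext t; simp [Function.mem_support, (pdf_pos t).ne']
  rw [hsupp, Set.univ_inter]
  simp [Real.volume_Iic]

lemma Ioi_integral_pos (x : ℝ) : 0 < ∫ t in Set.Ioi x, stdGaussianPDF t := by
  rw [setIntegral_pos_iff_support_of_nonneg_ae
    (by filter_upwards with t using (pdf_pos t).le) pdf_integrable.integrableOn]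
  have hsupp : Function.support stdGaussianPDF = Set.univ := by
    ext t; simp [Function.mem_support, (pdf_pos t).ne']
  rw [hsupp, Set.univ_inter]
  simp [Real.volume_Ioi]

lemma cdf_add_Ioi (x : ℝ) :
    stdGaussianCDF x + (∫ t in Set.Ioi x, stdGaussianPDF t) = 1 := by
  have := integral_add_compl (measurableSet_Iic (a := x)) pdf_integrable
  rw [Set.compl_Iic] at this
  unfold stdGaussianCDF
  rw [this, pdf_integral]

lemma cdf_lt_one (x : ℝ) : stdGaussianCDF x < 1 := by
  have := cdf_add_Ioi x
  linarith [Ioi_integral_pos x]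

lemma cdf_neg (x : ℝ) : stdGaussianCDF (-x) = 1 - stdGaussianCDF x := by
  have h1 : stdGaussianCDF (-x) = ∫ t in Set.Ioi x, stdGaussianPDF t := by
    unfold stdGaussianCDF
    rw [show (∫ t in Set.Iic (-x), stdGaussianPDF t)
        = ∫ t in Set.Iic (-x), stdGaussianPDF (-t) from
      integral_congr_ae (by
        filter_upwards with t
        unfold stdGaussianPDF
        ring_nf)]
    rw [integral_comp_neg_Iic, neg_neg]
  linarith [cdf_add_Ioi x, h1]

lemma pdf_tendsto_atBot : Tendsto stdGaussianPDF atBot (nhds 0) := by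
  have h1 : Tendsto (fun t : ℝ => -t ^ 2 / 2) atBot atBot := by
    apply tendsto_atBot_mono' atBot _ tendsto_id
    filter_upwards [eventually_le_atBot (-2:ℝ)] with t ht
    show -t ^ 2 / 2 ≤ t
    nlinarith
  have := (Real.tendsto_exp_atBot).comp h1
  have h2 := this.const_mul ((Real.sqrt (2 * Real.pi))⁻¹)
  rw [mul_zero] at h2
  exact h2.congr (fun t => by simp [stdGaussianPDF, Function.comp])

lemma neg_mul_pdf_integrable : Integrable (fun t : ℝ => -t * stdGaussianPDF t) := by
  have : Integrable (fun t : ℝ => -(Real.sqrt (2 * Real.pi))⁻¹ *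
      (t * Real.exp (-(1/2 : ℝ) * t ^ 2))) :=
    ((integrable_mul_exp_neg_mul_sq (by norm_num : (0:ℝ) < 1/2)).const_mul _)
  exact this.congr (by
    filter_upwards with t
    rw [pdf_eq]
    ring)

lemma integral_Iic_neg_mul_pdf (x : ℝ) :
    ∫ t in Set.Iic x, -t * stdGaussianPDF t = stdGaussianPDF x := by
  have := integral_Iic_of_hasDerivAt_of_tendsto'
    (f := stdGaussianPDF) (f' := fun t => -t * stdGaussianPDF t) (a := x) (m := 0)
    (fun t _ => pdf_hasDerivAt t) (neg_mul_pdf_integrable.integrableOn)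
    pdf_tendsto_atBot
  simpa using this

lemma mills (x : ℝ) : 0 ≤ x * stdGaussianCDF x + stdGaussianPDF x := by
  rcases le_or_gt 0 x with hx | hx
  · have h1 := cdf_pos x
    have h2 := pdf_pos x
    nlinarith
  · -- x < 0
    have h1 : stdGaussianCDF x ≤ ∫ t in Set.Iic x, (t / x) * stdGaussianPDF t := by
      unfold stdGaussianCDF
      apply setIntegral_mono_on pdf_integrable.integrableOn
      · have : Integrable (fun t : ℝ => (-x)⁻¹ * (-t * stdGaussianPDF t)) :=
          neg_mul_pdf_integrable.const_mul _
        exact (this.congr (by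
          filter_upwards with t
          field_simp
          try ring)).integrableOn
      · exact measurableSet_Iic
      · intro t ht
        have htx : t ≤ x := ht
        have hpdf := pdf_pos t
        have h1tx : (1:ℝ) ≤ t / x := by
          rw [le_div_iff_of_neg hx]
          linarith
        nlinarith
    have h2 : ∫ t in Set.Iic x, (t / x) * stdGaussianPDF t
        = (-x)⁻¹ * stdGaussianPDF x := by
      rw [← integral_Iic_neg_mul_pdf x, ← integral_const_mul]
      apply integral_congr_ae
      filter_upwards with t
      field_simp
      try ring
    rw [h2] at h1
    have hpx := pdf_pos x
    have h3 : x * stdGaussianCDF x ≥ x * ((-x)⁻¹ * stdGaussianPDF x) :=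
      mul_le_mul_of_nonpos_left h1 hx.le
    have h4 : x * ((-x)⁻¹ * stdGaussianPDF x) = -stdGaussianPDF x := by
      field_simp
      rw [div_self hx.ne]
    rw [h4] at h3
    linarith

lemma logcdf_concave :
    ConcaveOn ℝ Set.univ (fun z => Real.log (stdGaussianCDF z)) := by
  apply concaveOn_of_hasDerivWithinAt2_nonpos (f' := fun z => stdGaussianPDF z / stdGaussianCDF z)
    (f'' := fun z => ((-z * stdGaussianPDF z) * stdGaussianCDF z
      - stdGaussianPDF z * stdGaussianPDF z) / (stdGaussianCDF z) ^ 2)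
    convex_univ
  · exact fun z _ => ((cdf_hasDerivAt z).log (cdf_pos z).ne').continuousAt.continuousWithinAt
  · intro z _
    exact (((cdf_hasDerivAt z).log (cdf_pos z).ne')).hasDerivWithinAt
  · intro z _
    exact ((pdf_hasDerivAt z).div (cdf_hasDerivAt z) (cdf_pos z).ne').hasDerivWithinAt
  · intro z _
    apply div_nonpos_of_nonpos_of_nonneg _ (sq_nonneg _)
    have h1 := mills z
    have h2 := pdf_pos z
    nlinarith

/-- The probit per-observation log-likelihood
`ℓ(z) = y·log Φ(z) + (1−y)·log(1−Φ(z))` with `y ∈ {0,1}` is concave on `ℝ`. -/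
theorem probit_loglik_concave (y : ℝ) (hy : y = 0 ∨ y = 1) (ℓ : ℝ → ℝ)
    (hℓ : ∀ z, ℓ z = y * Real.log (stdGaussianCDF z)
      + (1 - y) * Real.log (1 - stdGaussianCDF z)) :
    ConcaveOn ℝ Set.univ ℓ := by
  rcases hy with rfl | rfl
  · -- y = 0 : ℓ z = log (1 - Φ z) = log (Φ (-z))
    have hℓ' : ℓ = (fun z => Real.log (stdGaussianCDF z)) ∘
        (LinearMap.toAffineMap (-(LinearMap.id : ℝ →ₗ[ℝ] ℝ))) := by
      funext z
      rw [hℓ z, ← cdf_neg]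
      simp
    rw [hℓ']
    have := logcdf_concave.comp_affineMap (LinearMap.toAffineMap (-(LinearMap.id : ℝ →ₗ[ℝ] ℝ)))
    simpa using this
  · -- y = 1
    have hℓ' : ℓ = fun z => Real.log (stdGaussianCDF z) := by
      funext z; rw [hℓ z]; ring
    rw [hℓ']
    exact logcdf_concave
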